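/- arXiv:math/0004047 — 7 statements merged into one kernel-verified Lean document; each statement's English description precedes it below -/
import Mathlib

section
/- If L is a bounded lattice and A ⊆ L is an infinite antichain, then there is a family of 2^|A| many pairwise incomparable monotone functions from L to L, where functions f, g : L → L are comparable iff f(x) ≤ g(x) for all x ∈ L or g(x) ≤ f(x) for all x ∈ L. -/
universe u

/-- If `A` is an infinite antichain in a bounded lattice `L`, then there is a family of
`2^|A|` many (indexed by `Set A`) pairwise incomparable monotone functions `L → L`,
where functions are compared in the pointwise order. -/
theorem antichain_gives_incomparable_monotone_functions (L : Type u) [Lattice L]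
    [BoundedOrder L] (A : Set L) (hA : A.Infinite) (hanti : IsAntichain (· ≤ ·) A) :
    ∃ F : Set A → (L → L), (∀ s, Monotone (F s)) ∧
      ∀ s t : Set A, s ≠ t → ¬F s ≤ F t ∧ ¬F t ≤ F s := by
  classical
  haveI : Infinite A := hA.to_subtype
  have hbotne : (⊥ : L) ≠ ⊤ := by
    obtain ⟨a, ha, b, hb, hab⟩ := hA.nontrivial
    intro h
    exact hanti ha hb hab (le_top.trans (h ▸ bot_le))
  have hcard : Cardinal.mk (A × Bool) = Cardinal.mk A := by
    rw [Cardinal.mk_prod]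
    simp only [Cardinal.mk_bool, Cardinal.lift_id, Cardinal.lift_ofNat, Cardinal.lift_id']
    have h2 : (2 : Cardinal) ≤ Cardinal.mk A :=
      le_trans (Cardinal.nat_lt_aleph0 2).le (Cardinal.aleph0_le_mk A)
    exact Cardinal.mul_eq_left (Cardinal.aleph0_le_mk A) h2 two_ne_zero
  obtain ⟨e'⟩ := Cardinal.eq.mp hcard
  set e : A ≃ A × Bool := e'.symm with he
  set σ : Set A → Set A := fun s => {a | ((e a).2 = true ∧ (e a).1 ∈ s) ∨
      ((e a).2 = false ∧ (e a).1 ∉ s)} with hσ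
  have hσdiff : ∀ s t : Set A, s ≠ t → (σ s \ σ t).Nonempty := by
    intro s t hst
    obtain ⟨a, ha⟩ : ∃ a : A, (a ∈ s ∧ a ∉ t) ∨ (a ∈ t ∧ a ∉ s) := by
      by_contra h
      push_neg at h
      exact hst (Set.ext fun a => ⟨fun h1 => by_contra fun h2 => h2 ((h a).1 h1),
        fun h1 => by_contra fun h2 => h2 ((h a).2 h1)⟩)
    rcases ha with ⟨has, hat⟩ | ⟨hat, has⟩
    · refine ⟨e.symm (a, true), ?_, ?_⟩
      · simp [hσ, has]
      · simp [hσ, hat]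
    · refine ⟨e.symm (a, false), ?_, ?_⟩
      · simp [hσ, has]
      · simp [hσ, hat]
  refine ⟨fun s x => if ∃ a ∈ σ s, (a : L) ≤ x then ⊤ else ⊥, ?_, ?_⟩
  · intro s x y hxy
    dsimp only
    split_ifs with h1 h2
    · exact le_rfl
    · obtain ⟨a, ha, hax⟩ := h1
      exact absurd ⟨a, ha, hax.trans hxy⟩ h2
    · exact bot_le
    · exact le_rfl
  · intro s t hst
    constructor
    · obtain ⟨b, hbs, hbt⟩ := hσdiff s t hst
      intro hle
      have h1 : (if ∃ a ∈ σ s, (a : L) ≤ (b : L) then (⊤:L) else ⊥) = ⊤ :=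
        if_pos ⟨b, hbs, le_rfl⟩
      have h2 : (if ∃ a ∈ σ t, (a : L) ≤ (b : L) then (⊤:L) else ⊥) = ⊥ := by
        apply if_neg
        rintro ⟨a, hat, hab⟩
        rcases eq_or_ne a b with rfl | hne
        · exact hbt hat
        · exact hanti a.2 b.2 (fun h => hne (Subtype.ext h)) hab
      have h3 := hle (b : L)
      dsimp only at h3
      rw [h1, h2] at h3
      exact hbotne (top_le_iff.mp h3)
    · obtain ⟨b, hbs, hbt⟩ := hσdiff t s hst.symm
      intro hle
      have h1 : (if ∃ a ∈ σ t, (a : L) ≤ (b : L) then (⊤:L) else ⊥) = ⊤ :=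
        if_pos ⟨b, hbs, le_rfl⟩
      have h2 : (if ∃ a ∈ σ s, (a : L) ≤ (b : L) then (⊤:L) else ⊥) = ⊥ := by
        apply if_neg
        rintro ⟨a, hat, hab⟩
        rcases eq_or_ne a b with rfl | hne
        · exact hbt hat
        · exact hanti a.2 b.2 (fun h => hne (Subtype.ext h)) hab
      have h3 := hle (b : L)
      dsimp only at h3
      rw [h1, h2] at h3
      exact hbotne (top_le_iff.mp h3)
end

section
/- For every infinite well-ordered set (W, ≤) there exist 2^|W| many distinct monotone functions from W to W. -/
universe u

/-- For every infinite well-ordered set `W` there are `2^|W|` many distinct monotone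
functions from `W` to `W` (a family indexed injectively by `Set W`). -/
theorem wellOrder_many_monotone_functions (W : Type u) [LinearOrder W] [WellFoundedLT W]
    [Infinite W] :
    ∃ F : Set W → (W → W), Function.Injective F ∧ ∀ s, Monotone (F s) := by
  classical
  letI : SuccOrder W := SuccOrder.ofLinearWellFoundedLT W
  -- the set of non-maximal elements
  set M : Set W := {x : W | ∃ y, x < y} with hM
  -- complement of M is a subsingleton (the possible maximum)
  have hsub : Mᶜ.Subsingleton := by
    intro x hx y hy
    simp only [hM, Set.mem_compl_iff, Set.mem_setOf_eq, not_exists, not_lt] at hx hy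
    exact le_antisymm (hy x) (hx y)
  have hcard : Cardinal.mk ↥M = Cardinal.mk W := by
    have h1 : Cardinal.mk ↥(Mᶜ) < Cardinal.mk W := by
      calc Cardinal.mk ↥(Mᶜ) ≤ 1 := Cardinal.mk_le_one_iff_set_subsingleton.2 hsub
        _ < Cardinal.aleph0 := Cardinal.one_lt_aleph0
        _ ≤ Cardinal.mk W := Cardinal.aleph0_le_mk W
    have := Cardinal.mk_compl_of_infinite (Mᶜ) h1
    rwa [compl_compl] at this
  obtain ⟨e⟩ := Cardinal.eq.1 hcard.symm
  -- e : W ≃ ↥M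
  refine ⟨fun s x => if x ∈ Subtype.val '' (e '' s) then Order.succ x else x, ?_, ?_⟩
  · intro s t hst
    ext a
    have hx : (e a : W) ∈ M := (e a).2
    have hnm : ¬ IsMax (e a : W) := by
      obtain ⟨y, hy⟩ := hx
      exact not_isMax_of_lt hy
    have hne : Order.succ (e a : W) ≠ (e a : W) :=
      ne_of_gt (Order.lt_succ_of_not_isMax hnm)
    have key : ∀ u : Set W, a ∈ u ↔ ((e a : W) ∈ Subtype.val '' (e '' u)) := by
      intro u
      constructor
      · intro ha; exact ⟨e a, ⟨a, ha, rfl⟩, rfl⟩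
      · rintro ⟨⟨b, hb⟩, ⟨c, hc, hcb⟩, hba⟩
        have : c = a := e.injective (by
          apply Subtype.ext
          rw [hcb]; exact hba)
        exact this ▸ hc
    have h := congrFun hst (e a : W)
    dsimp only at h
    by_cases ha : a ∈ s
    · by_cases hb : a ∈ t
      · simp [ha, hb]
      · exfalso
        rw [if_pos ((key s).1 ha), if_neg (fun h' => hb ((key t).2 h'))] at h
        exact hne h
    · by_cases hb : a ∈ t
      · exfalso
        rw [if_neg (fun h' => ha ((key s).2 h')), if_pos ((key t).1 hb)] at h
        exact hne h.symm
      · simp [ha, hb]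
  · intro s x y hxy
    rcases eq_or_lt_of_le hxy with rfl | hlt
    · exact le_rfl
    · dsimp only
      have h1 : (if x ∈ Subtype.val '' (e '' s) then Order.succ x else x) ≤ Order.succ x := by
        split <;> [exact le_rfl; exact Order.le_succ x]
      have h2 : Order.succ x ≤ y := Order.succ_le_of_lt hlt
      have h3 : y ≤ (if y ∈ Subtype.val '' (e '' s) then Order.succ y else y) := by
        split <;> [exact Order.le_succ y; exact le_rfl]
      exact h1.trans (h2.trans h3)
end

section
/- Let L be a bounded lattice, k ∈ ℕ, and κ an infinite cardinal of uncountable cofinality. If there is a family of κ many pairwise incomparable k-ary polynomial functions on L (in the pointwise order), then there exists n' ∈ ℕ such that L^{n'} (with the product order) contains an antichain of cardinality κ. -/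
/-!
A polynomial function is a constant-free lattice term evaluated at its variables and finitely
many constants. There are only countably many such terms, so by the uncountable cofinality of `κ`
some single term `t` with `n'` constants accounts for `κ` of the given functions. Since terms are
monotone in the constants, comparable constant tuples would give comparable functions; hence the
constant tuples of those `κ` functions form an antichain in `L^{n'}`.
-/

universe u

/-- `IsPolyFn L n p` says that `p : (Fin n → L) → L` is an `n`-ary lattice polynomial
function on `L`. -/
inductive IsPolyFn (L : Type u) [Lattice L] (n : ℕ) : ((Fin n → L) → L) → Prop
  | proj (i : Fin n) : IsPolyFn L n fun x => x i
  | const (c : L) : IsPolyFn L n fun _ => c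
  | sup {p q : (Fin n → L) → L} : IsPolyFn L n p → IsPolyFn L n q →
      IsPolyFn L n fun x => p x ⊔ q x
  | inf {p q : (Fin n → L) → L} : IsPolyFn L n p → IsPolyFn L n q →
      IsPolyFn L n fun x => p x ⊓ q x

universe v

open Cardinal Set

inductive LatticeTerm (α : Type*)
  | var (a : α)
  | sup (s t : LatticeTerm α)
  | inf (s t : LatticeTerm α)
  deriving Countable

namespace LatticeTerm

variable {α β L : Type*} [Lattice L]

def eval (v : α → L) : LatticeTerm α → L
  | var a => v a
  | sup s t => s.eval v ⊔ t.eval v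
  | inf s t => s.eval v ⊓ t.eval v

def map (f : α → β) : LatticeTerm α → LatticeTerm β
  | var a => var (f a)
  | sup s t => sup (s.map f) (t.map f)
  | inf s t => inf (s.map f) (t.map f)

theorem eval_map (f : α → β) (v : β → L) (t : LatticeTerm α) :
    (t.map f).eval v = t.eval (v ∘ f) := by
  induction t with
  | var a => rfl
  | sup s t hs ht => simp only [map, eval, hs, ht]
  | inf s t hs ht => simp only [map, eval, hs, ht]

theorem monotone_eval (t : LatticeTerm α) : Monotone fun v : α → L => t.eval v := by
  intro v w hvw
  induction t with
  | var a => exact hvw a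
  | sup s t hs ht => exact sup_le_sup hs ht
  | inf s t hs ht => exact inf_le_inf hs ht

theorem exists_common_consts {m₁ m₂ : ℕ} (t₁ : LatticeTerm (α ⊕ Fin m₁))
    (t₂ : LatticeTerm (α ⊕ Fin m₂)) (c₁ : Fin m₁ → L) (c₂ : Fin m₂ → L) :
    ∃ (m : ℕ) (s₁ s₂ : LatticeTerm (α ⊕ Fin m)) (c : Fin m → L),
      (∀ x, s₁.eval (Sum.elim x c) = t₁.eval (Sum.elim x c₁)) ∧
      (∀ x, s₂.eval (Sum.elim x c) = t₂.eval (Sum.elim x c₂)) := by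
  refine ⟨m₁ + m₂, t₁.map (Sum.map id (Fin.castAdd m₂)), t₂.map (Sum.map id (Fin.natAdd m₁)),
    Fin.append c₁ c₂, fun x => ?_, fun x => ?_⟩ <;>
  · rw [eval_map, Sum.elim_comp_map]
    congr 2
    funext i
    simp

end LatticeTerm

theorem IsPolyFn.exists_eq_eval {L : Type u} [Lattice L] {k : ℕ} {p : (Fin k → L) → L}
    (hp : IsPolyFn L k p) :
    ∃ (m : ℕ) (t : LatticeTerm (Fin k ⊕ Fin m)) (c : Fin m → L),
      p = fun x => t.eval (Sum.elim x c) := by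
  induction hp with
  | proj i => exact ⟨0, .var (.inl i), Fin.elim0, rfl⟩
  | const a => exact ⟨1, .var (.inr 0), fun _ => a, rfl⟩
  | sup _ _ ihp ihq =>
    obtain ⟨-, t₁, c₁, rfl⟩ := ihp
    obtain ⟨-, t₂, c₂, rfl⟩ := ihq
    obtain ⟨m, s₁, s₂, c, h₁, h₂⟩ := LatticeTerm.exists_common_consts t₁ t₂ c₁ c₂
    exact ⟨m, .sup s₁ s₂, c, funext fun x => by simp only [LatticeTerm.eval, h₁, h₂]⟩
  | inf _ _ ihp ihq =>
    obtain ⟨-, t₁, c₁, rfl⟩ := ihp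
    obtain ⟨-, t₂, c₂, rfl⟩ := ihq
    obtain ⟨m, s₁, s₂, c, h₁, h₂⟩ := LatticeTerm.exists_common_consts t₁ t₂ c₁ c₂
    exact ⟨m, .inf s₁ s₂, c, funext fun x => by simp only [LatticeTerm.eval, h₁, h₂]⟩

theorem Cardinal.exists_mk_preimage_singleton_eq_of_countable {ι : Type u} {α : Type v}
    [Countable α] (f : ι → α) (hcof : ℵ₀ < (#ι).ord.cof) : ∃ a, #(f ⁻¹' {a}) = #ι := by
  have hι : ℵ₀ ≤ #ι := hcof.le.trans (Ordinal.cof_ord_le _)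
  have hα : lift.{u} #α < lift.{v} (#ι).ord.cof :=
    (lift_le_aleph0.2 mk_le_aleph0).trans_lt (aleph0_lt_lift.2 hcof)
  obtain ⟨⟨a⟩, ha⟩ := infinite_pigeonhole (fun i : ULift.{v} ι => ULift.up.{u} (f i.down))
    (by simpa using hι) (by simpa [← lift_ord, ← Ordinal.lift_cof] using hα)
  refine ⟨a, lift_injective.{v} ?_⟩
  rw [← mk_preimage_down, ← mk_uLift, ← ha]
  congr! 2
  ext
  simp

theorem exists_antichain_of_pairwise_not_le {ι : Type u} {α : Type v} {γ : Type*} [Countable α]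
    {β : α → Type u} [∀ a, Preorder (β a)] [Preorder γ] {g : ∀ a, β a → γ}
    (hg : ∀ a, Monotone (g a)) {x : ι → Σ a, β a}
    (hx : Pairwise fun i j => ¬ g (x i).1 (x i).2 ≤ g (x j).1 (x j).2)
    (hcof : ℵ₀ < (#ι).ord.cof) :
    ∃ a, ∃ A : Set (β a), IsAntichain (· ≤ ·) A ∧ #A = #ι := by
  have hinj : x.Injective := fun i j hij => by_contra fun hne => hx hne (by rw [hij])
  obtain ⟨a, ha⟩ := exists_mk_preimage_singleton_eq_of_countable (Sigma.fst ∘ x) hcof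
  refine ⟨a, Sigma.mk a ⁻¹' range x, ?_, ?_⟩
  · rintro b ⟨i, hi⟩ b' ⟨j, hj⟩ hne hle
    have hij : i ≠ j := by
      rintro rfl
      exact hne (sigma_mk_injective (hi.symm.trans hj))
    exact hx hij (by rw [hi, hj]; exact hg a hle)
  · have hA : Sigma.mk a '' (Sigma.mk a ⁻¹' range x) = x '' (Sigma.fst ∘ x ⁻¹' {a}) := by
      rw [image_preimage_eq_inter_range, range_sigmaMk, preimage_comp,
        image_preimage_eq_range_inter]
    have h := mk_image_eq_lift (Sigma.mk a) (Sigma.mk a ⁻¹' range x) sigma_mk_injective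
    rw [hA, mk_image_eq_lift _ _ hinj, ha] at h
    exact lift_injective h.symm

theorem incomparable_polynomials_give_antichain_general (L : Type u) [Lattice L]
    (k : ℕ) (κ : Cardinal.{u})
    (hcof : Cardinal.aleph0 < (Cardinal.ord κ).cof)
    (ι : Type u) (hι : Cardinal.mk ι = κ)
    (P : ι → (Fin k → L) → L) (hP : ∀ i, IsPolyFn L k (P i))
    (hinc : ∀ i j : ι, i ≠ j → ¬P i ≤ P j ∧ ¬P j ≤ P i) :
    ∃ (n' : ℕ) (A : Set (Fin n' → L)),
      IsAntichain (· ≤ ·) A ∧ Cardinal.mk A = κ := by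
  choose m t c hPt using fun i => (hP i).exists_eq_eval
  subst hι
  have hmono (s : Σ m, LatticeTerm (Fin k ⊕ Fin m)) :
      Monotone fun c : Fin s.1 → L => fun x => s.2.eval (Sum.elim x c) :=
    fun c c' hc x => s.2.monotone_eval (Sum.elim_le_elim_iff.2 ⟨le_rfl, hc⟩)
  obtain ⟨⟨n', _⟩, hA⟩ := exists_antichain_of_pairwise_not_le hmono
    (x := fun i => ⟨⟨m i, t i⟩, c i⟩) (fun i j hij => by simpa only [← hPt] using (hinc i j hij).1)
    hcof
  exact ⟨n', hA⟩

/-- If a bounded lattice `L` carries `κ` many pairwise incomparable `k`-ary polynomial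
functions, where `κ` is an infinite cardinal of uncountable cofinality, then some power
`L^{n'}` contains an antichain of cardinality `κ`. -/
theorem incomparable_polynomials_give_antichain (L : Type u) [Lattice L] [BoundedOrder L]
    (k : ℕ) (κ : Cardinal.{u}) (hκ : Cardinal.aleph0 ≤ κ)
    (hcof : Cardinal.aleph0 < (Cardinal.ord κ).cof)
    (ι : Type u) (hι : Cardinal.mk ι = κ)
    (P : ι → (Fin k → L) → L) (hP : ∀ i, IsPolyFn L k (P i))
    (hinc : ∀ i j : ι, i ≠ j → ¬P i ≤ P j ∧ ¬P j ≤ P i) :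
    ∃ (n' : ℕ) (A : Set (Fin n' → L)),
      IsAntichain (· ≤ ·) A ∧ Cardinal.mk A = κ :=
  incomparable_polynomials_give_antichain_general L k κ hcof ι hι P hP hinc
end

section
/- There exists a complete bounded lattice L of cardinality ℵ_ω such that for every n ∈ ℕ, L contains a chain of cardinality ℵ_n, yet every chain in L has cardinality strictly less than ℵ_ω, every antichain in L is at most countable, and there are 2^{ℵ_ω} many monotone functions from L to L. -/
/-!
Take the horizontal sum of the well-orders `ω_n ×ₗ Bool`, `n ∈ ℕ`: their disjoint union, blocks
pairwise incomparable, with a common bottom and top adjoined. Every infimum is `⊥`, `⊤` or the least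
element of a single block, so the lattice is complete. A chain lies in one block up to `⊥` and `⊤`,
so it has fewer than `ℵ_ω` elements, while an antichain meets each block at most once. Each block
has `2 ^ ℵ_n` monotone self-maps `(a, b) ↦ (a, s a)`, one for each `s : ω_n → Bool`; they combine
blockwise into `∏ₙ 2 ^ ℵ_n = 2 ^ ℵ_ω` monotone self-maps of the lattice.
-/

open Cardinal Set
open scoped Ordinal

universe u

theorem Cardinal.mk_withBot_withTop (β : Type u) : #(WithBot (WithTop β)) = #β + 1 + 1 := by
  rw [← mk_option, ← mk_option]
  rfl

theorem Cardinal.sum_aleph_natCast : sum (fun n : ℕ => ℵ_ n) = ℵ_ ω := by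
  refine le_antisymm ?_ ?_
  · calc sum (fun n : ℕ => ℵ_ n) ≤ sum fun _ : ℕ => ℵ_ ω :=
          sum_le_sum _ _ fun n => aleph_le_aleph.2 (Ordinal.natCast_lt_omega0 n).le
      _ = ℵ_ ω := by simp [aleph0_mul_eq (aleph0_le_aleph _)]
  · rw [aleph_limit Ordinal.isSuccLimit_omega0]
    refine ciSup_le' fun ⟨o, ho⟩ => ?_
    obtain ⟨n, rfl⟩ := Ordinal.lt_omega0.1 ho
    exact le_sum (fun n : ℕ => ℵ_ n) n

theorem mk_fun_le_mk_monotone_lex {α β : Type u} [Preorder α] [Preorder β] [Nonempty β] :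
    #(α → β) ≤ #{f : α ×ₗ β → α ×ₗ β // Monotone f} := by
  refine mk_le_of_injective (f := fun s => ⟨fun p => toLex ((ofLex p).1, s (ofLex p).1), ?_⟩) ?_
  · intro p q hpq
    rw [Prod.Lex.le_iff] at hpq ⊢
    rcases hpq with h | ⟨h, -⟩
    · exact Or.inl h
    · exact Or.inr ⟨h, by simp [h]⟩
  · intro s t hst
    funext a
    simpa using congrFun (congrArg Subtype.val hst) (toLex (a, Classical.arbitrary β))

/-- `Σ i, α i` carries the disjoint-union order: elements of distinct blocks are incomparable. -/
abbrev HorizontalSum {ι : Type u} (α : ι → Type u) : Type u := WithBot (WithTop (Σ i, α i))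

namespace HorizontalSum

variable {ι : Type u} {α : ι → Type u}

def of (i : ι) (a : α i) : HorizontalSum α := ((⟨i, a⟩ : Σ i, α i) : WithTop (Σ i, α i))

theorem of_injective (i : ι) : Function.Injective (of (α := α) i) := fun _ _ h => by
  simpa [of] using h

@[elab_as_elim]
theorem induction {motive : HorizontalSum α → Prop} (bot : motive ⊥) (top : motive ⊤)
    (of : ∀ i a, motive (of i a)) (x : HorizontalSum α) : motive x := by
  induction x using WithBot.recBotCoe with
  | bot => exact bot
  | coe y =>
    induction y using WithTop.recTopCoe with
    | top => exact top
    | coe p => exact of p.1 p.2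

theorem mk_eq : #(HorizontalSum α) = sum (fun i => #(α i)) + 1 + 1 := by
  rw [mk_withBot_withTop, mk_sigma]

def blockIndex : HorizontalSum α → WithBot (WithTop ι) := WithBot.map (WithTop.map Sigma.fst)

@[simp]
theorem blockIndex_of (i : ι) (a : α i) :
    blockIndex (of i a) = ((i : WithTop ι) : WithBot (WithTop ι)) :=
  rfl

def liftMap (f : ∀ i, α i → α i) : HorizontalSum α → HorizontalSum α :=
  WithBot.map (WithTop.map (Sigma.map id f))

section Preorder

variable [∀ i, Preorder (α i)]

theorem of_le_of_iff {i : ι} {a b : α i} : of i a ≤ of i b ↔ a ≤ b := by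
  simp [of, Sigma.mk_le_mk_iff]

theorem eq_of_of_le_of {i j : ι} {a : α i} {b : α j} (h : of i a ≤ of j b) : i = j :=
  (Sigma.le_def.1 (WithTop.coe_le_coe.1 (WithBot.coe_le_coe.1 h))).1

theorem not_top_le_of (i : ι) (a : α i) : ¬(⊤ : HorizontalSum α) ≤ of i a :=
  fun h => (WithTop.coe_lt_top _).not_ge (WithBot.coe_le_coe.1 h)

theorem isGLB_bot_of_mem_of_mem {S : Set (HorizontalSum α)} {i j : ι} {a : α i} {b : α j}
    (ha : of i a ∈ S) (hb : of j b ∈ S) (hij : i ≠ j) : IsGLB S ⊥ := by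
  refine ⟨fun _ _ => bot_le, fun y hy => ?_⟩
  induction y using HorizontalSum.induction with
  | bot => exact le_rfl
  | top => exact absurd (hy ha) (not_top_le_of i a)
  | of k c => exact absurd ((eq_of_of_le_of (hy ha)).symm.trans (eq_of_of_le_of (hy hb))) hij

theorem exists_subset_range_of_isChain [Nonempty ι] {C : Set (HorizontalSum α)}
    (hC : IsChain (· ≤ ·) C) : ∃ i, C ⊆ range (WithBot.map (WithTop.map (Sigma.mk i))) := by
  by_cases h : ∃ i a, of i a ∈ C
  · obtain ⟨i, a, ha⟩ := h
    refine ⟨i, fun x hx => ?_⟩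
    induction x using HorizontalSum.induction with
    | bot => exact ⟨⊥, rfl⟩
    | top => exact ⟨⊤, rfl⟩
    | of j b =>
      obtain rfl : j = i := by
        rcases hC.total hx ha with h | h
        exacts [eq_of_of_le_of h, (eq_of_of_le_of h).symm]
      exact ⟨((b : WithTop (α j)) : WithBot _), rfl⟩
  · push Not at h
    refine ⟨Classical.arbitrary ι, fun x hx => ?_⟩
    induction x using HorizontalSum.induction with
    | bot => exact ⟨⊥, rfl⟩
    | top => exact ⟨⊤, rfl⟩
    | of j b => exact absurd hx (h j b)

theorem mk_le_of_isChain [Nonempty ι] {C : Set (HorizontalSum α)} (hC : IsChain (· ≤ ·) C) :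
    ∃ i, #C ≤ #(α i) + 1 + 1 := by
  obtain ⟨i, hi⟩ := exists_subset_range_of_isChain hC
  exact ⟨i, (mk_le_mk_of_subset hi).trans (mk_range_le.trans (mk_withBot_withTop _).le)⟩

theorem monotone_liftMap {f : ∀ i, α i → α i} (hf : ∀ i, Monotone (f i)) :
    Monotone (liftMap f) := by
  refine Monotone.withBot_map (Monotone.withTop_map ?_)
  rintro _ _ ⟨i, a, b, hab⟩
  exact Sigma.LE.fiber i _ _ (hf i hab)

theorem mk_pi_monotone_le :
    #(∀ i, {f : α i → α i // Monotone f}) ≤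
      #{g : HorizontalSum α → HorizontalSum α // Monotone g} := by
  refine mk_le_of_injective
    (f := fun f => ⟨liftMap fun i => f i, monotone_liftMap fun i => (f i).2⟩) ?_
  intro f g hfg
  funext i
  ext a
  exact of_injective i (congrFun (congrArg Subtype.val hfg) (of i a))

end Preorder

section LinearOrder

variable [∀ i, LinearOrder (α i)]

theorem isChain_range_of (i : ι) : IsChain (· ≤ ·) (range (of (α := α) i)) := by
  rintro _ ⟨a, rfl⟩ _ ⟨b, rfl⟩ -
  simp only [of_le_of_iff]
  exact le_total a b

theorem injOn_blockIndex_of_isAntichain {A : Set (HorizontalSum α)}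
    (hA : IsAntichain (· ≤ ·) A) : InjOn blockIndex A := by
  intro x hx y hy hxy
  induction x using HorizontalSum.induction with
  | bot => exact hA.eq hx hy bot_le
  | top => exact (hA.eq hy hx le_top).symm
  | of i a =>
    induction y using HorizontalSum.induction with
    | bot => exact (hA.eq hy hx bot_le).symm
    | top => exact hA.eq hx hy le_top
    | of j b =>
      obtain rfl : i = j := by simpa using hxy
      rcases le_total a b with h | h
      exacts [hA.eq hx hy (of_le_of_iff.2 h), (hA.eq hy hx (of_le_of_iff.2 h)).symm]

theorem countable_of_isAntichain [Countable ι] {A : Set (HorizontalSum α)}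
    (hA : IsAntichain (· ≤ ·) A) : A.Countable :=
  (mapsTo_univ _ _).countable_of_injOn (injOn_blockIndex_of_isAntichain hA) countable_univ

variable [∀ i, WellFoundedLT (α i)]

theorem exists_isGLB (S : Set (HorizontalSum α)) : ∃ x, IsGLB S x := by
  by_cases hbot : ⊥ ∈ S
  · exact ⟨⊥, (isLeast_bot_iff.2 hbot).isGLB⟩
  by_cases hS : ∃ i a, of i a ∈ S
  · obtain ⟨i, a, ha⟩ := hS
    by_cases hsplit : ∃ j b, of j b ∈ S ∧ j ≠ i
    · obtain ⟨j, b, hb, hji⟩ := hsplit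
      exact ⟨⊥, isGLB_bot_of_mem_of_mem ha hb hji.symm⟩
    push Not at hsplit
    obtain ⟨m, hm, hmin⟩ := wellFounded_lt.has_min {b | of i b ∈ S} ⟨a, ha⟩
    refine ⟨of i m, fun x hx => ?_, fun y hy => hy hm⟩
    induction x using HorizontalSum.induction with
    | bot => exact absurd hx hbot
    | top => exact le_top
    | of j b =>
      obtain rfl := hsplit j b hx
      exact of_le_of_iff.2 (not_lt.1 (hmin b hx))
  · push Not at hS
    refine ⟨⊤, fun x hx => ?_, fun _ _ => le_top⟩
    induction x using HorizontalSum.induction with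
    | bot => exact absurd hx hbot
    | top => exact le_rfl
    | of j b => exact absurd hx (hS j b)

noncomputable instance : CompleteLattice (HorizontalSum α) :=
  letI : InfSet (HorizontalSum α) := ⟨fun S => (exists_isGLB S).choose⟩
  completeLatticeOfInf _ fun S => (exists_isGLB S).choose_spec

end LinearOrder

end HorizontalSum

/-- Doubling `ω_n` lexicographically keeps its cardinality but gives it `2 ^ ℵ_n` monotone
self-maps. -/
abbrev AlephBlock (n : ℕ) : Type := (ℵ_ n).ord.ToType ×ₗ Bool

theorem mk_alephBlock (n : ℕ) : #(AlephBlock n) = ℵ_ n := by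
  rw [← mk_congr toLex, mk_prod, lift_id, lift_id, mk_toType, card_ord, mk_bool]
  exact Cardinal.mul_eq_left (aleph0_le_aleph _)
    ((natCast_lt_aleph0 (n := 2)).le.trans (aleph0_le_aleph _)) two_ne_zero

/-- There is a complete (bounded) lattice `L` of cardinality `ℵ_ω` which contains chains of
cardinality `ℵ_n` for each `n`, but all of whose chains have cardinality `< ℵ_ω` and all of
whose antichains are at most countable, and which admits `2^{ℵ_ω}` many monotone
functions `L → L`. -/
theorem exists_lattice_aleph_omega_chains :
    ∃ (L : Type) (_ : CompleteLattice L),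
      Cardinal.mk L = Cardinal.aleph Ordinal.omega0 ∧
      (∀ n : ℕ, ∃ C : Set L, IsChain (· ≤ ·) C ∧ Cardinal.mk C = Cardinal.aleph n) ∧
      (∀ C : Set L, IsChain (· ≤ ·) C → Cardinal.mk C < Cardinal.aleph Ordinal.omega0) ∧
      (∀ A : Set L, IsAntichain (· ≤ ·) A → A.Countable) ∧
      Cardinal.mk {f : L → L // Monotone f} = 2 ^ Cardinal.aleph Ordinal.omega0 := by
  have add_two {n : ℕ} : ℵ_ n + 1 + 1 = ℵ_ n := by
    rw [add_one_eq (aleph0_le_aleph _), add_one_eq (aleph0_le_aleph _)]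
  have hL : #(HorizontalSum AlephBlock) = ℵ_ ω := by
    simp only [HorizontalSum.mk_eq, mk_alephBlock, sum_aleph_natCast,
      add_one_eq (aleph0_le_aleph _)]
  refine ⟨HorizontalSum AlephBlock, inferInstance, hL, fun n => ?_, fun C hC => ?_,
    fun A hA => HorizontalSum.countable_of_isAntichain hA, le_antisymm ?_ ?_⟩
  · exact ⟨range (HorizontalSum.of n), HorizontalSum.isChain_range_of n,
      (mk_range_eq _ (HorizontalSum.of_injective n)).trans (mk_alephBlock n)⟩
  · obtain ⟨n, hn⟩ := HorizontalSum.mk_le_of_isChain hC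
    rw [mk_alephBlock, add_two] at hn
    exact hn.trans_lt (aleph_lt_aleph.2 (Ordinal.natCast_lt_omega0 n))
  · calc #{f : HorizontalSum AlephBlock → HorizontalSum AlephBlock // Monotone f}
        _ ≤ #(HorizontalSum AlephBlock → HorizontalSum AlephBlock) := mk_subtype_le _
        _ = 2 ^ ℵ_ ω := by rw [← power_def, hL, power_self_eq (aleph0_le_aleph _)]
  · calc 2 ^ ℵ_ ω = prod fun n : ℕ => #((ℵ_ n).ord.ToType → Bool) := by
          simp only [← sum_aleph_natCast, power_sum, ← power_def, mk_bool, mk_toType, card_ord]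
      _ ≤ prod fun n => #{f : AlephBlock n → AlephBlock n // Monotone f} :=
          prod_le_prod _ _ fun n => mk_fun_le_mk_monotone_lex
      _ ≤ _ := (mk_pi _).symm.trans_le HorizontalSum.mk_pi_monotone_le
end

section
/- A finite bounded lattice L is o.p.c. if and only if L is simple and satisfies Wille's property. -/
/-!
Polynomials preserve congruences and satisfy `f (p x) ≤ p (f ∘ x)` for every regressive
join-endomorphism `f`; applied to monotone step functions this gives simplicity and Wille's
property. Conversely, for `u < v` the pairs `(p u, p v)`, `p` a unary polynomial, form a
sublattice of `L × L` containing the diagonal. In a finite lattice, sending `y` to the least `x`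
with `(x, y)` in it is a regressive join-endomorphism other than the identity, so by Wille's
property it is constantly `⊥`: some unary polynomial maps `u` to `⊥` and `v` to `⊤`. Meets of
such polynomials give the indicator of every principal filter, and a monotone `f` is the join
over all `a` of `f a ⊓ ⨅ i, [a i ≤ x i]`.
-/

universe u

/-- `r` is a lattice congruence: an equivalence relation compatible with `⊔` and `⊓`. -/
def IsLatticeCongruence (L : Type u) [Lattice L] (r : L → L → Prop) : Prop :=
  Equivalence r ∧
    ∀ a b c d : L, r a b → r c d → r (a ⊔ c) (b ⊔ d) ∧ r (a ⊓ c) (b ⊓ d)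

/-- A lattice is simple if its only congruences are equality and the all-relation. -/
def IsSimpleLattice (L : Type u) [Lattice L] : Prop :=
  ∀ r : L → L → Prop, IsLatticeCongruence L r →
    (∀ x y : L, r x y ↔ x = y) ∨ (∀ x y : L, r x y)

/-- Wille's property: the only regressive join-homomorphisms `L → L` are the identity
and the constant map with value `⊥`. -/
def WilleProperty (L : Type u) [Lattice L] [BoundedOrder L] : Prop :=
  ∀ f : L → L, (∀ x, f x ≤ x) → (∀ x y, f (x ⊔ y) = f x ⊔ f y) →
    f = id ∨ f = fun _ => (⊥ : L)

inductive IsUnaryPoly (L : Type u) [Lattice L] : (L → L) → Prop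
  | var : IsUnaryPoly L fun x => x
  | const (c : L) : IsUnaryPoly L fun _ => c
  | sup {p q : L → L} : IsUnaryPoly L p → IsUnaryPoly L q → IsUnaryPoly L fun x => p x ⊔ q x
  | inf {p q : L → L} : IsUnaryPoly L p → IsUnaryPoly L q → IsUnaryPoly L fun x => p x ⊓ q x

open Classical in
noncomputable def upIndicator {L : Type u} [Preorder L] [OrderBot L] (a b x : L) : L :=
  if a ≤ x then b else ⊥

section Preorder

variable {L : Type u} [Preorder L] [OrderBot L] {a b x : L}

@[simp]
theorem upIndicator_of_le (h : a ≤ x) : upIndicator a b x = b := if_pos h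

@[simp]
theorem upIndicator_of_not_le (h : ¬a ≤ x) : upIndicator a b x = ⊥ := if_neg h

theorem monotone_upIndicator (a b : L) : Monotone (upIndicator a b) := by
  intro x y hxy
  by_cases hx : a ≤ x
  · rw [upIndicator_of_le hx, upIndicator_of_le (hx.trans hxy)]
  · rw [upIndicator_of_not_le hx]
    exact bot_le

end Preorder

theorem InfClosed.exists_isLeast {α : Type*} [SemilatticeInf α] {s : Set α} (hs : InfClosed s)
    (hfin : s.Finite) (hne : s.Nonempty) : ∃ a, IsLeast s a :=
  ⟨hfin.toFinset.inf' (by simpa) id, hs.finsetInf'_mem _ (by simp),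
    fun _ hy => Finset.inf'_le _ (by simpa)⟩

theorem Monotone.eq_finset_sup_inf_upIndicator {L ι : Type*} [Lattice L] [BoundedOrder L]
    [Fintype L] [Fintype ι] [DecidableEq ι] {f : (ι → L) → L} (hf : Monotone f) (x : ι → L) :
    f x = Finset.univ.sup fun a => f a ⊓ Finset.univ.inf fun i => upIndicator (a i) ⊤ (x i) := by
  refine le_antisymm (le_trans (le_of_eq ?_) (Finset.le_sup (Finset.mem_univ x)))
    (Finset.sup_le fun a _ => ?_)
  · simp [upIndicator_of_le]
  by_cases hax : a ≤ x
  · exact inf_le_left.trans (hf hax)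
  obtain ⟨i, hi⟩ := not_forall.1 hax
  calc f a ⊓ Finset.univ.inf (fun i => upIndicator (a i) ⊤ (x i))
      ≤ upIndicator (a i) ⊤ (x i) := inf_le_right.trans (Finset.inf_le (Finset.mem_univ i))
    _ = ⊥ := upIndicator_of_not_le hi
    _ ≤ f x := bot_le

section Lattice

variable {L : Type u} [Lattice L]

namespace IsUnaryPoly

theorem monotone {p : L → L} (hp : IsUnaryPoly L p) : Monotone p := by
  induction hp with
  | var => exact monotone_id
  | const c => exact monotone_const
  | sup _ _ ihp ihq => exact ihp.sup ihq
  | inf _ _ ihp ihq => exact ihp.inf ihq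

theorem comp {p q : L → L} (hp : IsUnaryPoly L p) (hq : IsUnaryPoly L q) :
    IsUnaryPoly L (p ∘ q) := by
  induction hp with
  | var => exact hq
  | const c => exact const c
  | sup _ _ ihp ihq => exact sup ihp ihq
  | inf _ _ ihp ihq => exact inf ihp ihq

theorem comp_isPolyFn {n : ℕ} {p : L → L} {q : (Fin n → L) → L} (hp : IsUnaryPoly L p)
    (hq : IsPolyFn L n q) : IsPolyFn L n (p ∘ q) := by
  induction hp with
  | var => exact hq
  | const c => exact IsPolyFn.const c
  | sup _ _ ihp ihq => exact IsPolyFn.sup ihp ihq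
  | inf _ _ ihp ihq => exact IsPolyFn.inf ihp ihq

theorem finset_inf [OrderTop L] {ι : Type*} (s : Finset ι) {P : ι → L → L}
    (h : ∀ i ∈ s, IsUnaryPoly L (P i)) : IsUnaryPoly L fun x => s.inf fun i => P i x := by
  rw [← funext (Finset.inf_apply s P)]
  exact Finset.inf_induction (p := IsUnaryPoly L) (const ⊤) (fun _ hp _ hq => inf hp hq) h

end IsUnaryPoly

namespace IsPolyFn

variable {n : ℕ} {p : (Fin n → L) → L}

theorem finset_sup [OrderBot L] {ι : Type*} (s : Finset ι) {P : ι → (Fin n → L) → L}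
    (h : ∀ i ∈ s, IsPolyFn L n (P i)) : IsPolyFn L n fun x => s.sup fun i => P i x := by
  rw [← funext (Finset.sup_apply s P)]
  exact Finset.sup_induction (p := IsPolyFn L n) (const ⊥) (fun _ hp _ hq => sup hp hq) h

theorem finset_inf [OrderTop L] {ι : Type*} (s : Finset ι) {P : ι → (Fin n → L) → L}
    (h : ∀ i ∈ s, IsPolyFn L n (P i)) : IsPolyFn L n fun x => s.inf fun i => P i x := by
  rw [← funext (Finset.inf_apply s P)]
  exact Finset.inf_induction (p := IsPolyFn L n) (const ⊤) (fun _ hp _ hq => inf hp hq) h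

theorem rel_map {r : L → L → Prop} (hr : IsLatticeCongruence L r) (hp : IsPolyFn L n p)
    {x y : Fin n → L} (h : ∀ i, r (x i) (y i)) : r (p x) (p y) := by
  induction hp with
  | proj i => exact h i
  | const c => exact hr.1.refl c
  | sup _ _ ihp ihq => exact (hr.2 _ _ _ _ ihp ihq).1
  | inf _ _ ihp ihq => exact (hr.2 _ _ _ _ ihp ihq).2

theorem map_le_of_regressive {f : L → L} (hreg : ∀ x, f x ≤ x)
    (hsup : ∀ x y, f (x ⊔ y) = f x ⊔ f y) (hp : IsPolyFn L n p) (x : Fin n → L) :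
    f (p x) ≤ p (f ∘ x) := by
  have hmono : Monotone f := OrderHomClass.mono (SupHom.mk f hsup)
  induction hp with
  | proj i => exact le_rfl
  | const c => exact hreg c
  | sup _ _ ihp ihq => exact (hsup _ _).trans_le (sup_le_sup ihp ihq)
  | inf _ _ ihp ihq =>
    exact le_inf ((hmono inf_le_left).trans ihp) ((hmono inf_le_right).trans ihq)

end IsPolyFn

namespace IsLatticeCongruence

variable {r : L → L → Prop}

theorem rel_inf_sup (hr : IsLatticeCongruence L r) {a b : L} (hab : r a b) : r (a ⊓ b) (a ⊔ b) := by
  have hinf := (hr.2 a b b b hab (hr.1.refl b)).2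
  have hsup := (hr.2 a b b b hab (hr.1.refl b)).1
  rw [inf_idem] at hinf
  rw [sup_idem] at hsup
  exact hr.1.trans hinf (hr.1.symm hsup)

theorem rel_of_rel_bot_top [BoundedOrder L] (hr : IsLatticeCongruence L r) (h : r ⊥ ⊤)
    (x y : L) : r x y := by
  have hx : r x ⊤ := by simpa using (hr.2 ⊥ ⊤ x x h (hr.1.refl x)).1
  have hy : r y ⊤ := by simpa using (hr.2 ⊥ ⊤ y y h (hr.1.refl y)).1
  exact hr.1.trans hx (hr.1.symm hy)

end IsLatticeCongruence

def unaryPolyImage (u v : L) : Sublattice (L × L) where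
  carrier := {z | ∃ p, IsUnaryPoly L p ∧ (p u, p v) = z}
  supClosed' := by
    rintro _ ⟨p, hp, rfl⟩ _ ⟨q, hq, rfl⟩
    exact ⟨_, hp.sup hq, rfl⟩
  infClosed' := by
    rintro _ ⟨p, hp, rfl⟩ _ ⟨q, hq, rfl⟩
    exact ⟨_, hp.inf hq, rfl⟩

variable [BoundedOrder L]

theorem isSimpleLattice_of_monotone_isPolyFn
    (h : ∀ f : (Fin 1 → L) → L, Monotone f → IsPolyFn L 1 f) : IsSimpleLattice L := by
  refine fun r hr => or_iff_not_imp_left.2 fun hne => ?_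
  obtain ⟨a, b, hab, hne⟩ : ∃ a b, r a b ∧ a ≠ b := by
    by_contra! hrel
    exact hne fun x y => ⟨hrel x y, fun hxy => hxy ▸ hr.1.refl x⟩
  have hstep := h _ ((monotone_upIndicator (a ⊔ b) ⊤).comp (Function.monotone_eval 0))
  have hbot_top := hstep.rel_map hr (x := fun _ => a ⊓ b) (y := fun _ => a ⊔ b)
    fun _ => hr.rel_inf_sup hab
  simp only [Function.comp_apply, upIndicator_of_le le_rfl,
    upIndicator_of_not_le (inf_lt_sup.2 hne).not_ge] at hbot_top
  exact hr.rel_of_rel_bot_top hbot_top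

theorem willeProperty_of_monotone_isPolyFn
    (h : ∀ f : (Fin 1 → L) → L, Monotone f → IsPolyFn L 1 f) : WilleProperty L := by
  refine fun f hreg hsup => or_iff_not_imp_right.2 fun hf => funext fun a => ?_
  obtain ⟨b, hb⟩ : ∃ b, f b ≠ ⊥ := by
    by_contra! hb
    exact hf (funext hb)
  by_contra hfa
  have hstep := h _ ((monotone_upIndicator a b).comp (Function.monotone_eval 0))
  have hle := hstep.map_le_of_regressive hreg hsup fun _ => a
  simp only [Function.comp_apply, upIndicator_of_le le_rfl,
    upIndicator_of_not_le ((hreg a).lt_of_ne hfa).not_ge] at hle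
  exact hb (le_bot_iff.1 hle)

variable [Finite L]

namespace WilleProperty

theorem bot_top_mem (hw : WilleProperty L) (T : Sublattice (L × L))
    (hdiag : ∀ y, (y, y) ∈ T) {u v : L} (huv : u < v) (h : (u, v) ∈ T) : (⊥, ⊤) ∈ T := by
  choose g hg using fun y => InfClosed.exists_isLeast (s := {x | (x, y) ∈ T})
    (fun _ hx _ hx' => by simpa using T.inf_mem hx hx') (Set.toFinite _) ⟨y, hdiag y⟩
  have hreg : ∀ y, g y ≤ y := fun y => (hg y).2 (hdiag y)
  have hmono : Monotone g := fun y y' hyy' => by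
    have hmem : (g y' ⊓ y, y) ∈ T := by
      simpa [inf_eq_right.2 hyy'] using T.inf_mem (hg y').1 (hdiag y)
    exact ((hg y).2 hmem).trans inf_le_left
  have hsup : ∀ y y', g (y ⊔ y') = g y ⊔ g y' := fun y y' =>
    le_antisymm ((hg _).2 (T.sup_mem (hg y).1 (hg y').1))
      (sup_le (hmono le_sup_left) (hmono le_sup_right))
  rcases hw g hreg hsup with hid | hbot
  · exact absurd ((hg v).2 h) (by rw [hid]; exact huv.not_ge)
  · simpa [hbot] using (hg ⊤).1

theorem exists_isUnaryPoly_bot_top (hw : WilleProperty L) {u v : L} (huv : u < v) :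
    ∃ p, IsUnaryPoly L p ∧ p u = ⊥ ∧ p v = ⊤ := by
  obtain ⟨p, hp, hpuv⟩ := hw.bot_top_mem (unaryPolyImage u v) (fun y => ⟨_, .const y, rfl⟩)
    huv ⟨_, .var, rfl⟩
  exact ⟨p, hp, (Prod.mk.inj hpuv).1, (Prod.mk.inj hpuv).2⟩

theorem exists_isUnaryPoly_top_bot (hw : WilleProperty L) {b y : L} (hby : ¬b ≤ y) :
    ∃ p, IsUnaryPoly L p ∧ p b = ⊤ ∧ p y = ⊥ := by
  obtain ⟨p, hp, hpy, hpby⟩ := hw.exists_isUnaryPoly_bot_top (right_lt_sup.2 hby)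
  exact ⟨p ∘ (· ⊔ y), hp.comp (.sup .var (.const y)), hpby, by simpa using hpy⟩

theorem isUnaryPoly_upIndicator (hw : WilleProperty L) (b : L) :
    IsUnaryPoly L (upIndicator b ⊤) := by
  have : Fintype L := Fintype.ofFinite L
  have hsep : ∀ y, ∃ p, IsUnaryPoly L p ∧ p b = ⊤ ∧ (¬b ≤ y → p y = ⊥) := fun y => by
    by_cases hby : b ≤ y
    · exact ⟨fun _ => ⊤, .const ⊤, rfl, absurd hby⟩
    · obtain ⟨p, hp, hpb, hpy⟩ := hw.exists_isUnaryPoly_top_bot hby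
      exact ⟨p, hp, hpb, fun _ => hpy⟩
  choose P hP hPb hPy using hsep
  have hP_inf : upIndicator b ⊤ = fun t => Finset.univ.inf fun y => P y t := by
    funext t
    by_cases hbt : b ≤ t
    · rw [upIndicator_of_le hbt, eq_comm, Finset.inf_eq_top_iff]
      exact fun y _ => top_le_iff.1 (hPb y ▸ (hP y).monotone hbt)
    · rw [upIndicator_of_not_le hbt]
      exact (le_bot_iff.1 <|
        (Finset.inf_le (f := (P · t)) (Finset.mem_univ t)).trans_eq (hPy t hbt)).symm
  rw [hP_inf]
  exact IsUnaryPoly.finset_inf _ fun y _ => hP y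

theorem isPolyFn_of_monotone (hw : WilleProperty L) {n : ℕ} {f : (Fin n → L) → L}
    (hf : Monotone f) : IsPolyFn L n f := by
  have : Fintype L := Fintype.ofFinite L
  rw [funext hf.eq_finset_sup_inf_upIndicator]
  exact IsPolyFn.finset_sup _ fun a _ => (IsPolyFn.const (f a)).inf <|
    IsPolyFn.finset_inf _ fun i _ => (hw.isUnaryPoly_upIndicator (a i)).comp_isPolyFn (.proj i)

end WilleProperty

end Lattice

/-- A finite bounded lattice is order-polynomially complete iff it is simple and
satisfies Wille's property. -/
theorem finite_opc_iff_simple_and_wille (L : Type u) [Lattice L] [BoundedOrder L]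
    [Finite L] :
    (∀ (n : ℕ) (f : (Fin n → L) → L), Monotone f → IsPolyFn L n f) ↔
      IsSimpleLattice L ∧ WilleProperty L :=
  ⟨fun h => ⟨isSimpleLattice_of_monotone_isPolyFn (h 1), willeProperty_of_monotone_isPolyFn (h 1)⟩,
    fun ⟨_, hw⟩ _ _ hf => hw.isPolyFn_of_monotone hf⟩
end

section
/- Let L be a bounded lattice, D ⊆ L, and f : D → L a monotone partial function. Then there is a bounded lattice L' such that L is a bounded sublattice of L' and there is a unary polynomial function p on L' with p(a) = f(a) for all a ∈ D. Moreover, if L is a complete lattice, then L' can be chosen to be a complete lattice which is an end extension of L, i.e., for all b ∈ L' and all a ∈ L with a ≠ ⊤, if b ≤ a then b ∈ L. -/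
/-!
We may assume `L` complete (for the first claim, pass to its Dedekind–MacNeille completion); then
`f` extends to the monotone map `F a = ⨆ {f d | d ∈ D, d ≤ a}` on all of `L`.

The extension `PolyExtension F` consists of the tuples `(copied, applied, arg, lower)` with flags
`copied : Prop`, `applied : Bool → Prop` and entries `arg : Bool → L`, `lower : L`, ordered
componentwise, subject to `copied → lower ≤ arg i`, `applied i → F (arg i) ≤ lower`, and
`lower = ⊤` only at the top. These conditions survive componentwise infima, so the tuples form a
complete lattice, in which `a ≠ ⊤` becomes the tuple with `lower = a` and everything else `⊥`;
these tuples form a down-set. In branch `i` of the polynomial, joining such an `a` with the least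
tuple carrying the flag `copied` copies `a` into both arguments, meeting with the tuple with
`arg i = ⊤` and everything else `⊥` keeps only `arg i = a`, and joining with the least tuple
carrying the flag `applied i` raises `lower` to `F a`. The two branches use different arguments, so
their meet is the image of `F a`.
-/

universe u

/-- `e` is a bounded lattice embedding: an injective map preserving `⊔`, `⊓`, `⊥`, `⊤`. -/
def IsBddLatticeEmbedding {L M : Type u} [Lattice L] [BoundedOrder L]
    [Lattice M] [BoundedOrder M] (e : L → M) : Prop :=
  Function.Injective e ∧ (∀ x y, e (x ⊔ y) = e x ⊔ e y) ∧
    (∀ x y, e (x ⊓ y) = e x ⊓ e y) ∧ e ⊥ = ⊥ ∧ e ⊤ = ⊤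

/-- Order-theoretic completeness: every subset has a least upper bound and a greatest
lower bound. -/
def OrderComplete (M : Type u) [Lattice M] : Prop :=
  ∀ S : Set M, (∃ a, IsLUB S a) ∧ ∃ a, IsGLB S a

universe v w

section Embeddings

variable {L M N : Type u} [Lattice L] [BoundedOrder L] [Lattice M] [BoundedOrder M]
  [Lattice N] [BoundedOrder N]

theorem IsBddLatticeEmbedding.id : IsBddLatticeEmbedding (id : L → L) :=
  ⟨Function.injective_id, fun _ _ => rfl, fun _ _ => rfl, rfl, rfl⟩

theorem IsBddLatticeEmbedding.comp {e : M → N} {g : L → M} (he : IsBddLatticeEmbedding e)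
    (hg : IsBddLatticeEmbedding g) : IsBddLatticeEmbedding (e ∘ g) := by
  obtain ⟨he, he_sup, he_inf, he_bot, he_top⟩ := he
  obtain ⟨hg, hg_sup, hg_inf, hg_bot, hg_top⟩ := hg
  exact ⟨he.comp hg, fun x y => by simp [hg_sup, he_sup], fun x y => by simp [hg_inf, he_inf],
    by simp [hg_bot, he_bot], by simp [hg_top, he_top]⟩

theorem DedekindCut.isBddLatticeEmbedding_principal :
    IsBddLatticeEmbedding (DedekindCut.principal : L → DedekindCut L) :=
  ⟨fun _ _ => DedekindCut.principal_inj.mp,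
    fun _ _ => DedekindCut.ext' (Set.Ici_inter_Ici).symm,
    fun _ _ => DedekindCut.ext (Set.Iic_inter_Iic).symm,
    DedekindCut.ext' Set.Ici_bot, DedekindCut.ext Set.Iic_top⟩

end Embeddings

noncomputable abbrev OrderComplete.toCompleteLattice {L : Type u} [Lattice L] [BoundedOrder L]
    (h : OrderComplete L) : CompleteLattice L where
  __ := ‹Lattice L›
  __ := ‹BoundedOrder L›
  sSup S := (h S).1.choose
  sInf S := (h S).2.choose
  isLUB_sSup S := (h S).1.choose_spec
  isGLB_sInf S := (h S).2.choose_spec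

theorem orderComplete_of_completeLattice (M : Type u) [CompleteLattice M] : OrderComplete M :=
  fun S => ⟨⟨sSup S, isLUB_sSup S⟩, sInf S, isGLB_sInf S⟩

theorem exists_orderHom_extend {L : Type v} {K : Type w} [Preorder L] [CompleteLattice K]
    (ι : L ↪o K) {D : Set L} {f : D → L} (hf : Monotone f) :
    ∃ F : K →o K, ∀ d : D, F (ι d) = ι (f d) :=
  ⟨⟨fun k => ⨆ (d : D) (_ : ι d ≤ k), ι (f d),
      fun _ _ hk => iSup₂_mono' fun d hd => ⟨d, hd.trans hk, le_rfl⟩⟩,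
    fun d => le_antisymm (iSup₂_le fun _ h => ι.le_iff_le.mpr (hf (ι.le_iff_le.mp h)))
      (le_iSup₂_of_le d le_rfl le_rfl)⟩

@[ext]
structure PolyExtension {K : Type u} [CompleteLattice K] (F : K →o K) where
  copied : Prop
  applied : Bool → Prop
  arg : Bool → K
  lower : K
  lower_le_arg : copied → ∀ i, lower ≤ arg i
  map_arg_le : ∀ i, applied i → F (arg i) ≤ lower
  of_lower_eq_top : lower = ⊤ → copied ∧ ∀ i, applied i ∧ arg i = ⊤

namespace PolyExtension

variable {K : Type u} [CompleteLattice K] {F : K →o K}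

instance : PartialOrder (PolyExtension F) where
  le x y := (x.copied → y.copied) ∧ (∀ i, x.applied i → y.applied i) ∧ x.arg ≤ y.arg ∧
    x.lower ≤ y.lower
  le_refl x := ⟨id, fun _ => id, le_rfl, le_rfl⟩
  le_trans x y z hxy hyz :=
    ⟨hyz.1 ∘ hxy.1, fun i => hyz.2.1 i ∘ hxy.2.1 i, hxy.2.2.1.trans hyz.2.2.1,
      hxy.2.2.2.trans hyz.2.2.2⟩
  le_antisymm x y hxy hyx := PolyExtension.ext (propext ⟨hxy.1, hyx.1⟩)
    (funext fun i => propext ⟨hxy.2.1 i, hyx.2.1 i⟩) (hxy.2.2.1.antisymm hyx.2.2.1)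
    (hxy.2.2.2.antisymm hyx.2.2.2)

instance : InfSet (PolyExtension F) where
  sInf T :=
    { copied := ∀ x ∈ T, x.copied
      applied i := ∀ x ∈ T, x.applied i
      arg i := ⨅ x ∈ T, x.arg i
      lower := ⨅ x ∈ T, x.lower
      lower_le_arg := fun h i =>
        le_iInf₂ fun x hx => (iInf₂_le x hx).trans (x.lower_le_arg (h x hx) i)
      map_arg_le := fun i h =>
        le_iInf₂ fun x hx => (F.mono (iInf₂_le x hx)).trans (x.map_arg_le i (h x hx))
      of_lower_eq_top := fun h => by
        have hT x (hx : x ∈ T) := x.of_lower_eq_top (iInf₂_eq_top.mp h x hx)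
        exact ⟨fun x hx => (hT x hx).1, fun i => ⟨fun x hx => ((hT x hx).2 i).1,
          iInf₂_eq_top.mpr fun x hx => ((hT x hx).2 i).2⟩⟩ }

instance : Min (PolyExtension F) where
  min x y :=
    { copied := x.copied ∧ y.copied
      applied i := x.applied i ∧ y.applied i
      arg := x.arg ⊓ y.arg
      lower := x.lower ⊓ y.lower
      lower_le_arg := fun h i => inf_le_inf (x.lower_le_arg h.1 i) (y.lower_le_arg h.2 i)
      map_arg_le := fun i h => le_inf ((F.mono inf_le_left).trans (x.map_arg_le i h.1))
        ((F.mono inf_le_right).trans (y.map_arg_le i h.2))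
      of_lower_eq_top := fun h => by
        obtain ⟨hx, hy⟩ := inf_eq_top_iff.mp h
        obtain ⟨hxc, hxa⟩ := x.of_lower_eq_top hx
        obtain ⟨hyc, hya⟩ := y.of_lower_eq_top hy
        exact ⟨⟨hxc, hyc⟩,
          fun i => ⟨⟨(hxa i).1, (hya i).1⟩, by simp [(hxa i).2, (hya i).2]⟩⟩ }

theorem isGLB_sInf (T : Set (PolyExtension F)) : IsGLB T (sInf T) :=
  ⟨fun x hx =>
      ⟨fun h => h x hx, fun _ h => h x hx, fun _ => iInf₂_le x hx, iInf₂_le x hx⟩,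
    fun _ hy => ⟨fun h _ hx => (hy hx).1 h, fun i h _ hx => (hy hx).2.1 i h,
      fun i => le_iInf₂ fun _ hx => (hy hx).2.2.1 i, le_iInf₂ fun _ hx => (hy hx).2.2.2⟩⟩

instance : CompleteLattice (PolyExtension F) where
  __ := completeLatticeOfInf (PolyExtension F) isGLB_sInf
  inf := min
  inf_le_left _ _ := ⟨And.left, fun _ => And.left, inf_le_left, inf_le_left⟩
  inf_le_right _ _ := ⟨And.right, fun _ => And.right, inf_le_right, inf_le_right⟩
  le_inf _ _ _ hx hy := ⟨fun h => ⟨hx.1 h, hy.1 h⟩, fun i h => ⟨hx.2.1 i h, hy.2.1 i h⟩,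
    le_inf hx.2.2.1 hy.2.2.1, le_inf hx.2.2.2 hy.2.2.2⟩

@[simp] theorem inf_copied (x y : PolyExtension F) :
    (x ⊓ y).copied = (x.copied ∧ y.copied) := rfl
@[simp] theorem inf_applied (x y : PolyExtension F) (i : Bool) :
    (x ⊓ y).applied i = (x.applied i ∧ y.applied i) := rfl
@[simp] theorem inf_arg (x y : PolyExtension F) : (x ⊓ y).arg = x.arg ⊓ y.arg := rfl
@[simp] theorem inf_lower (x y : PolyExtension F) : (x ⊓ y).lower = x.lower ⊓ y.lower := rfl

theorem eq_top_of_lower_eq_top {x : PolyExtension F} (h : x.lower = ⊤) : x = ⊤ := by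
  obtain ⟨hc, ha⟩ := x.of_lower_eq_top h
  exact eq_top_iff.mpr
    ⟨fun _ => hc, fun i _ => (ha i).1, fun i => le_top.trans (ha i).2.ge, le_top.trans h.ge⟩

def embed (a : K) : PolyExtension F := sInf {x | a ≤ x.lower}

theorem embed_le_iff {a : K} {x : PolyExtension F} : embed a ≤ x ↔ a ≤ x.lower :=
  ⟨fun h => (show a ≤ (embed a).lower from le_iInf₂ fun _ hy => hy).trans h.2.2.2,
    fun h => sInf_le h⟩

theorem gc_embed_lower : GaloisConnection (embed (F := F)) lower := fun _ _ => embed_le_iff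

theorem embed_top : embed (F := F) ⊤ = ⊤ :=
  eq_top_of_lower_eq_top (top_le_iff.mp (embed_le_iff.mp le_rfl))

def ofLower (a : K) (ha : a ≠ ⊤) : PolyExtension F where
  copied := False
  applied _ := False
  arg := ⊥
  lower := a
  lower_le_arg := False.elim
  map_arg_le _ := False.elim
  of_lower_eq_top h := absurd h ha

theorem embed_of_ne_top {a : K} (ha : a ≠ ⊤) : embed a = ofLower (F := F) a ha :=
  le_antisymm (embed_le_iff.mpr le_rfl)
    (le_sInf fun _ hx => ⟨False.elim, fun _ => False.elim, bot_le, hx⟩)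

theorem lower_embed (a : K) : (embed (F := F) a).lower = a := by
  by_cases ha : a = ⊤
  · subst ha
    exact top_le_iff.mp (embed_le_iff.mp le_rfl)
  · rw [embed_of_ne_top ha]; rfl

theorem embed_inf (a b : K) : embed (F := F) (a ⊓ b) = embed a ⊓ embed b := by
  by_cases ha : a = ⊤
  · rw [ha, top_inf_eq, embed_top, top_inf_eq]
  refine le_antisymm (gc_embed_lower.monotone_l.map_inf_le a b) ?_
  rw [embed_of_ne_top (ne_top_of_le_ne_top ha inf_le_left), embed_of_ne_top ha]
  exact ⟨And.left, fun _ => And.left, inf_le_left,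
    inf_le_inf_left a (lower_embed b).le⟩

theorem isBddLatticeEmbedding_embed : IsBddLatticeEmbedding (embed (F := F)) :=
  ⟨Function.LeftInverse.injective lower_embed, fun _ _ => gc_embed_lower.l_sup, embed_inf,
    gc_embed_lower.l_bot, embed_top⟩

theorem exists_embed_eq_of_le_embed {x : PolyExtension F} {a : K} (ha : a ≠ ⊤)
    (h : x ≤ embed a) : ∃ c, embed c = x := by
  rw [embed_of_ne_top ha] at h
  obtain ⟨hc, happ, harg, hlow⟩ := h
  refine ⟨x.lower, ?_⟩
  rw [embed_of_ne_top (ne_top_of_le_ne_top ha hlow)]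
  exact PolyExtension.ext (propext ⟨False.elim, hc⟩)
    (funext fun i => propext ⟨False.elim, happ i⟩) (le_bot_iff.mp harg).symm rfl

def copyOf (a : K) (ha : a ≠ ⊤) : PolyExtension F where
  copied := True
  applied _ := False
  arg _ := a
  lower := a
  lower_le_arg _ _ := le_rfl
  map_arg_le _ := False.elim
  of_lower_eq_top h := absurd h ha

def appliedOf (i : Bool) (a c : K) (hac : F a ≤ c) (hc : c ≠ ⊤) : PolyExtension F where
  copied := False
  applied j := j = i
  arg := Function.update ⊥ i a
  lower := c
  lower_le_arg := False.elim
  map_arg_le j hj := by subst hj; simpa using hac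
  of_lower_eq_top h := absurd h hc

theorem appliedOf_inf_appliedOf {a c : K} (hac : F a ≤ c) (hc : c ≠ ⊤) :
    appliedOf true a c hac hc ⊓ appliedOf false a c hac hc = embed c := by
  rw [embed_of_ne_top hc]
  ext : 1
  · simp [appliedOf, ofLower]
  · funext j; cases j <;> simp [appliedOf, ofLower]
  · funext j; cases j <;> simp [appliedOf, ofLower]
  · simp [appliedOf, ofLower]

section Nontrivial

variable [Nontrivial K]

def argOf (i : Bool) (a : K) : PolyExtension F where
  copied := False
  applied _ := False
  arg := Function.update ⊥ i a
  lower := ⊥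
  lower_le_arg := False.elim
  map_arg_le _ := False.elim
  of_lower_eq_top h := absurd h bot_ne_top

theorem embed_sup_copyOf_bot {a : K} (ha : a ≠ ⊤) :
    embed a ⊔ copyOf (F := F) ⊥ bot_ne_top = copyOf a ha := by
  refine le_antisymm
    (sup_le (embed_le_iff.mpr le_rfl) ⟨id, fun _ => id, fun _ => bot_le, bot_le⟩) ?_
  set n := embed a ⊔ copyOf (F := F) ⊥ bot_ne_top
  have hcopied : n.copied := (le_sup_right : copyOf ⊥ _ ≤ n).1 trivial
  have hlower : a ≤ n.lower := embed_le_iff.mp le_sup_left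
  exact ⟨fun _ => hcopied, fun _ => False.elim, fun i => hlower.trans (n.lower_le_arg hcopied i),
    hlower⟩

theorem embed_sup_copyOf_bot_inf_argOf_top (a : K) (i : Bool) :
    (embed a ⊔ copyOf ⊥ bot_ne_top) ⊓ argOf (F := F) i ⊤ = argOf i a := by
  by_cases ha : a = ⊤
  · rw [ha, embed_top, top_sup_eq, top_inf_eq]
  rw [embed_sup_copyOf_bot ha]
  ext : 1
  · simp [copyOf, argOf]
  · funext j; simp [copyOf, argOf]
  · funext j; by_cases hj : j = i <;> simp [copyOf, argOf, hj]
  · simp [copyOf, argOf]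

theorem le_of_argOf_le_of_appliedOf_le (hF : F ⊥ ≠ ⊤) {i : Bool} {a : K} {n : PolyExtension F}
    (harg : argOf i a ≤ n) (happ : appliedOf i ⊥ (F ⊥) le_rfl hF ≤ n) :
    n.applied i ∧ a ≤ n.arg i ∧ F a ≤ n.lower := by
  have hni : n.applied i := happ.2.1 i rfl
  have hai : a ≤ n.arg i := by simpa [argOf] using harg.2.2.1 i
  exact ⟨hni, hai, (F.mono hai).trans (n.map_arg_le i hni)⟩

theorem argOf_sup_appliedOf (hF : F ⊥ ≠ ⊤) (i : Bool) {a : K} (hFa : F a ≠ ⊤) :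
    argOf i a ⊔ appliedOf i ⊥ (F ⊥) le_rfl hF = appliedOf i a (F a) le_rfl hFa := by
  refine le_antisymm (sup_le ⟨False.elim, fun _ => False.elim, le_rfl, bot_le⟩
    ⟨False.elim, fun _ => id, update_le_update_iff'.mpr bot_le, F.mono bot_le⟩) ?_
  obtain ⟨hni, hai, hFa⟩ := le_of_argOf_le_of_appliedOf_le hF le_sup_left le_sup_right
  exact ⟨False.elim, by rintro _ rfl; exact hni,
    update_le_iff.mpr ⟨hai, fun _ _ => bot_le⟩, hFa⟩

theorem argOf_sup_appliedOf_of_eq_top (hF : F ⊥ ≠ ⊤) (i : Bool) {a : K} (hFa : F a = ⊤) :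
    argOf i a ⊔ appliedOf i ⊥ (F ⊥) le_rfl hF = ⊤ :=
  eq_top_of_lower_eq_top <| top_le_iff.mp <|
    hFa ▸ (le_of_argOf_le_of_appliedOf_le hF le_sup_left le_sup_right).2.2

def branch (hF : F ⊥ ≠ ⊤) (i : Bool) (x : PolyExtension F) : PolyExtension F :=
  ((x ⊔ copyOf ⊥ bot_ne_top) ⊓ argOf i ⊤) ⊔ appliedOf i ⊥ (F ⊥) le_rfl hF

def poly (hF : F ⊥ ≠ ⊤) (x : Fin 1 → PolyExtension F) : PolyExtension F :=
  branch hF true (x 0) ⊓ branch hF false (x 0)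

theorem isPolyFn_poly (hF : F ⊥ ≠ ⊤) : IsPolyFn (PolyExtension F) 1 (poly hF) :=
  have branch (i : Bool) : IsPolyFn (PolyExtension F) 1 (fun x => branch hF i (x 0)) :=
    .sup (.inf (.sup (.proj 0) (.const _)) (.const _)) (.const _)
  .inf (branch true) (branch false)

theorem poly_embed (hF : F ⊥ ≠ ⊤) (a : K) : poly hF (fun _ => embed a) = embed (F a) := by
  simp only [poly, branch, embed_sup_copyOf_bot_inf_argOf_top]
  by_cases hFa : F a = ⊤
  · rw [argOf_sup_appliedOf_of_eq_top hF _ hFa, argOf_sup_appliedOf_of_eq_top hF _ hFa, hFa,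
      embed_top, inf_idem]
  · rw [argOf_sup_appliedOf hF _ hFa, argOf_sup_appliedOf hF _ hFa, appliedOf_inf_appliedOf]

end Nontrivial

end PolyExtension

theorem exists_isBddLatticeEmbedding_isPolyFn_map {K : Type u} [CompleteLattice K]
    (F : K →o K) :
    ∃ (M : Type u) (_ : Lattice M) (_ : BoundedOrder M) (e : K → M),
      IsBddLatticeEmbedding e ∧ OrderComplete M ∧
      (∀ (b : M) (a : K), a ≠ ⊤ → b ≤ e a → ∃ c : K, e c = b) ∧
      ∃ p : (Fin 1 → M) → M, IsPolyFn M 1 p ∧ ∀ a, p (fun _ => e a) = e (F a) := by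
  by_cases hF : F ⊥ = ⊤
  · have hFa (a : K) : F a = ⊤ := top_le_iff.mp (hF ▸ F.mono bot_le)
    exact ⟨K, inferInstance, inferInstance, id, .id, orderComplete_of_completeLattice K,
      fun b _ _ _ => ⟨b, rfl⟩, fun _ => ⊤, .const ⊤, fun a => (hFa a).symm⟩
  · have : Nontrivial K := ⟨⊥, ⊤, fun h => hF (eq_top_iff.mpr (h ▸ bot_le))⟩
    exact ⟨PolyExtension F, inferInstance, inferInstance, PolyExtension.embed,
      PolyExtension.isBddLatticeEmbedding_embed, orderComplete_of_completeLattice _,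
      fun _ _ => PolyExtension.exists_embed_eq_of_le_embed, PolyExtension.poly hF,
      PolyExtension.isPolyFn_poly hF, PolyExtension.poly_embed hF⟩

/-- Every monotone partial function `f : D → L` on a bounded lattice `L` becomes the
restriction of a unary polynomial function in a suitable bounded lattice extension `L'`
of `L`; moreover, if `L` is complete, `L'` can be chosen complete and an end extension
of `L`. -/
theorem monotone_partial_function_polynomial_extension (L : Type u) [Lattice L]
    [BoundedOrder L] (D : Set L) (f : D → L)
    (hf : ∀ x y : D, (x : L) ≤ (y : L) → f x ≤ f y) :
    (∃ (M : Type u) (_ : Lattice M) (_ : BoundedOrder M) (e : L → M),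
        IsBddLatticeEmbedding e ∧
        ∃ p : (Fin 1 → M) → M, IsPolyFn M 1 p ∧
          ∀ a : D, p (fun _ => e a) = e (f a)) ∧
    (OrderComplete L →
      ∃ (M : Type u) (_ : Lattice M) (_ : BoundedOrder M) (e : L → M),
        IsBddLatticeEmbedding e ∧ OrderComplete M ∧
        (∀ (b : M) (a : L), a ≠ ⊤ → b ≤ e a → ∃ c : L, e c = b) ∧
        ∃ p : (Fin 1 → M) → M, IsPolyFn M 1 p ∧
          ∀ a : D, p (fun _ => e a) = e (f a)) := by
  constructor
  · obtain ⟨F, hF⟩ := exists_orderHom_extend DedekindCut.principalEmbedding hf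
    obtain ⟨M, _, _, e, he, -, -, p, hp, hpF⟩ := exists_isBddLatticeEmbedding_isPolyFn_map F
    exact ⟨M, _, _, e ∘ DedekindCut.principal,
      he.comp DedekindCut.isBddLatticeEmbedding_principal, p, hp,
      fun a => (hpF _).trans (congrArg e (hF a))⟩
  · intro hL
    let := hL.toCompleteLattice
    obtain ⟨F, hF⟩ := exists_orderHom_extend (OrderIso.refl L).toOrderEmbedding hf
    obtain ⟨M, _, _, e, he, hM, hend, p, hp, hpF⟩ := exists_isBddLatticeEmbedding_isPolyFn_map F
    exact ⟨M, _, _, e, he, hM, hend, p, hp, fun a => (hpF a).trans (congrArg e (hF a))⟩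
end

section
/- Let (O, ⊔, ⊓, ⊥, ⊤, ᶜ) be an ortholattice and f : O → O an arbitrary function. Then there is an ortholattice Ō such that O is an ortho-sublattice of Ō and there is a unary orthopolynomial function p on Ō with p(a) = f(a) for all a ∈ O. -/
universe u

/-- An ortholattice: a bounded lattice with an antitone orthocomplementation `ᶜ`
satisfying `xᶜᶜ = x`, `x ⊔ xᶜ = ⊤` and `x ⊓ xᶜ = ⊥`. -/
class Ortholattice (O : Type u) extends Lattice O, BoundedOrder O, Compl O where
  compl_antitone : ∀ x y : O, x ≤ y → yᶜ ≤ xᶜ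
  compl_compl : ∀ x : O, xᶜᶜ = x
  sup_compl : ∀ x : O, x ⊔ xᶜ = ⊤
  inf_compl : ∀ x : O, x ⊓ xᶜ = ⊥

/-- `IsOrthoPolyFn O n p` says that `p : (Fin n → O) → O` is an `n`-ary orthopolynomial
function on `O`: it lies in the smallest set of functions containing the coordinate
projections and all constant functions and closed under pointwise join, meet and
orthocomplement. -/
inductive IsOrthoPolyFn (O : Type u) [Ortholattice O] (n : ℕ) : ((Fin n → O) → O) → Prop
  | proj (i : Fin n) : IsOrthoPolyFn O n fun x => x i
  | const (c : O) : IsOrthoPolyFn O n fun _ => c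
  | sup {p q : (Fin n → O) → O} : IsOrthoPolyFn O n p → IsOrthoPolyFn O n q →
      IsOrthoPolyFn O n fun x => p x ⊔ q x
  | inf {p q : (Fin n → O) → O} : IsOrthoPolyFn O n p → IsOrthoPolyFn O n q →
      IsOrthoPolyFn O n fun x => p x ⊓ q x
  | compl {p : (Fin n → O) → O} : IsOrthoPolyFn O n p →
      IsOrthoPolyFn O n fun x => (p x)ᶜ

/-- `e` is an ortholattice embedding: an injective map preserving `⊔`, `⊓`, `⊥`, `⊤`
and `ᶜ` (so its image is an ortho-sublattice). -/
def IsOrthoEmbedding {O M : Type u} [Ortholattice O] [Ortholattice M] (e : O → M) : Prop :=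
  Function.Injective e ∧ (∀ x y, e (x ⊔ y) = e x ⊔ e y) ∧
    (∀ x y, e (x ⊓ y) = e x ⊓ e y) ∧ e ⊥ = ⊥ ∧ e ⊤ = ⊤ ∧ ∀ x, e xᶜ = (e x)ᶜ

/-!
The extension is the ortholattice of orthogonally closed sets of an orthogonality space, i.e. of
a symmetric irreflexive relation. Its points of nonzero weight `c : O` are orthogonal when their
weights are, so `b ↦ {points of weight ≤ b}` embeds `O`. For a family of functions `F i` that
never take the value `⊤` one adds points `eval i t a` of weight `(F i a)ᶜ`, points `probe d t c`
orthogonal to `eval _ t a` iff `c ≤ a` (for `d = false`) resp. `c ≤ aᶜ` (for `d = true`), and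
marker points whose orthogonals serve as constants. A fixed unary orthopolynomial then cuts out
of the image of `a`, through marked copies of its points, the probes below `a` and below `aᶜ`,
and from these the single point `eval i t a`. Probes and markers see only one of the two copies `t = false, true`, so the common
orthogonal of the two copies is the image of `F i a`.
Finally `f = F₀ ⊔ F₁` with `F₀, F₁` avoiding `⊤`, by splitting `⊤ = d ⊔ dᶜ` for some
`d ∉ {⊥, ⊤}`; when there is no such `d`, `O = {⊥, ⊤}` and `f` is already an orthopolynomial.
-/

namespace Ortholattice

variable {O : Type u} [Ortholattice O] {x y : O}

theorem compl_le_compl (h : x ≤ y) : yᶜ ≤ xᶜ := compl_antitone x y h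

theorem le_compl_comm : x ≤ yᶜ ↔ y ≤ xᶜ :=
  ⟨fun h => compl_compl y ▸ compl_le_compl h, fun h => compl_compl x ▸ compl_le_compl h⟩

theorem compl_le_compl_iff : yᶜ ≤ xᶜ ↔ x ≤ y := by
  rw [le_compl_comm, compl_compl]

theorem compl_bot : (⊥ : O)ᶜ = ⊤ := by
  simpa using sup_compl (⊥ : O)

theorem compl_top : (⊤ : O)ᶜ = ⊥ := by
  simpa using inf_compl (⊤ : O)

theorem compl_eq_bot : xᶜ = ⊥ ↔ x = ⊤ :=
  ⟨fun h => by rw [← compl_compl x, h, compl_bot], fun h => h ▸ compl_top⟩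

theorem compl_eq_top : xᶜ = ⊤ ↔ x = ⊥ :=
  ⟨fun h => by rw [← compl_compl x, h, compl_top], fun h => h ▸ compl_bot⟩

theorem compl_sup : (x ⊔ y)ᶜ = xᶜ ⊓ yᶜ :=
  le_antisymm (le_inf (compl_le_compl le_sup_left) (compl_le_compl le_sup_right))
    (le_compl_comm.1 (sup_le (le_compl_comm.1 inf_le_left) (le_compl_comm.1 inf_le_right)))

theorem eq_bot_of_le_compl_self (h : x ≤ xᶜ) : x = ⊥ :=
  le_bot_iff.1 (inf_compl x ▸ le_inf le_rfl h)

theorem le_iff_forall_le_compl {b c : O} :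
    c ≤ b ↔ ∀ c', (bᶜ = ⊤ ∨ c' ≠ ⊥ ∧ c' ≤ bᶜ) → c ≤ c'ᶜ := by
  refine ⟨fun hcb c' hc' => ?_, fun h => ?_⟩
  · rcases hc' with hb | ⟨-, hc'⟩
    · rw [compl_eq_top.1 hb, le_bot_iff] at hcb
      exact hcb ▸ bot_le
    · exact hcb.trans (le_compl_comm.1 hc')
  · by_cases hb : bᶜ = ⊥
    · exact (compl_eq_bot.1 hb).symm ▸ le_top
    · simpa [compl_compl] using h bᶜ (Classical.or_iff_not_imp_left.2 fun _ => ⟨hb, le_rfl⟩)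

theorem exists_sup_eq_of_ne_bot_of_ne_top {d : O} (hd_bot : d ≠ ⊥) (hd_top : d ≠ ⊤) (x : O) :
    ∃ y z : O, y ≠ ⊤ ∧ z ≠ ⊤ ∧ y ⊔ z = x := by
  by_cases hx : x = ⊤
  · exact ⟨d, dᶜ, hd_top, fun h => hd_bot (compl_eq_top.1 h), hx ▸ sup_compl d⟩
  · exact ⟨x, ⊥, hx, (hd_bot.bot_lt.trans_le le_top).ne, sup_bot_eq x⟩

end Ortholattice

theorem isOrthoEmbedding_id {O : Type u} [Ortholattice O] : IsOrthoEmbedding (id : O → O) :=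
  ⟨Function.injective_id, fun _ _ => rfl, fun _ _ => rfl, rfl, rfl, fun _ => rfl⟩

theorem isOrthoPolyFn_of_forall_eq_bot_or_eq_top {O : Type u} [Ortholattice O]
    (h : ∀ x : O, x = ⊥ ∨ x = ⊤) (f : O → O) : IsOrthoPolyFn O 1 fun z => f (z 0) := by
  have hp : IsOrthoPolyFn O 1 fun z => z 0 ⊓ f ⊤ ⊔ (z 0)ᶜ ⊓ f ⊥ :=
    .sup (.inf (.proj 0) (.const _)) (.inf (.compl (.proj 0)) (.const _))
  convert hp using 2 with z
  rcases h (z 0) with h0 | h0 <;> simp [h0, Ortholattice.compl_bot, Ortholattice.compl_top]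

namespace SimpleGraph

variable {V : Type u} (G : SimpleGraph V)

theorem upperPolar_adj (S : Set V) : upperPolar G.Adj S = lowerPolar G.Adj S := by
  ext p
  simp only [mem_upperPolar_iff, mem_lowerPolar_iff, G.adj_comm]

theorem lowerPolar_adj_univ : lowerPolar G.Adj Set.univ = ∅ :=
  Set.eq_empty_iff_forall_notMem.2 fun p hp => G.irrefl (hp (Set.mem_univ p))

theorem inter_lowerPolar_adj (S : Set V) : S ∩ lowerPolar G.Adj S = ∅ :=
  Set.eq_empty_iff_forall_notMem.2 fun _ hp => G.irrefl (hp.2 hp.1)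

/-- The orthogonally closed sets of a symmetric irreflexive relation, encoded as its formal
concepts; the orthocomplement exchanges extent and intent. -/
instance : Ortholattice (Concept V V G.Adj) where
  compl c := ⟨c.intent, c.extent, by rw [upperPolar_adj, c.lowerPolar_intent],
    by rw [← upperPolar_adj, c.upperPolar_extent]⟩
  compl_antitone c d h :=
    Concept.extent_subset_extent_iff.1 (Concept.intent_subset_intent_iff.2 h)
  compl_compl c := rfl
  sup_compl c := Concept.ext' <| by
    change c.intent ∩ c.extent = upperPolar G.Adj Set.univ
    rw [upperPolar_adj, lowerPolar_adj_univ, ← c.lowerPolar_intent, inter_lowerPolar_adj]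
  inf_compl c := Concept.ext <| by
    change c.extent ∩ c.intent = lowerPolar G.Adj Set.univ
    rw [lowerPolar_adj_univ, ← c.upperPolar_extent, upperPolar_adj, inter_lowerPolar_adj]

variable {G}

theorem extent_compl (c : Concept V V G.Adj) : cᶜ.extent = lowerPolar G.Adj c.extent := by
  rw [← upperPolar_adj, c.upperPolar_extent]
  rfl

end SimpleGraph

namespace OrthoFrame

inductive Point (O : Type u) (ι : Type u) : Type u
  | atom (c : O)
  | copy (d : Bool) (c : O)
  | eval (i : ι) (t : Bool) (a : O)
  | probe (d t : Bool) (c : O)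
  | copyTag (d : Bool)
  | probeTag (d t : Bool)
  | evalTag (i : ι) (t : Bool)

variable {O : Type u} [Ortholattice O] {ι : Type u} (F : ι → O → O)

def weight : Point O ι → O
  | .atom c | .copy _ c => c
  | .eval i _ a => (F i a)ᶜ
  | _ => ⊥

def Link : Point O ι → Point O ι → Prop
  | .copyTag d, .copy d' _ => d = d'
  | .probeTag d t, .probe d' t' _ => d = d' ∧ t = t'
  | .evalTag i t, .eval i' t' _ => i = i' ∧ t = t'
  | .probe d _ c, .copy d' c' => d = d' ∧ c ≤ c'ᶜ
  | .probe d t c, .eval _ t' a => t = t' ∧ c ≤ cond d aᶜ a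
  | _, _ => False

theorem not_link_self (p : Point O ι) : ¬ Link p p := by
  cases p <;> simp [Link]

def orth : SimpleGraph (Point O ι) where
  Adj p q := (weight F p ≠ ⊥ ∧ weight F q ≠ ⊥ ∧ weight F p ≤ (weight F q)ᶜ) ∨ Link p q ∨ Link q p
  symm := ⟨fun p q => by
    rintro (⟨hp, hq, h⟩ | h | h)
    exacts [Or.inl ⟨hq, hp, Ortholattice.le_compl_comm.1 h⟩, Or.inr (Or.inr h), Or.inr (Or.inl h)]⟩
  loopless := ⟨fun p => by
    rintro (⟨hp, -, h⟩ | h | h)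
    exacts [hp (Ortholattice.eq_bot_of_le_compl_self h), not_link_self p h, not_link_self p h]⟩

abbrev Extension := Concept (Point O ι) (Point O ι) (orth F).Adj

def down (b : O) : Set (Point O ι) := {p | b = ⊤ ∨ weight F p ≠ ⊥ ∧ weight F p ≤ b}

def orthOf (g : Point O ι) : Extension F := Concept.ofAttribute (orth F).Adj g

def probes (d t : Bool) (z : Extension F) : Extension F :=
  (zᶜ ⊓ orthOf F (.copyTag d))ᶜ ⊓ orthOf F (.probeTag d t)

def evalAt (i : ι) (t : Bool) (z : Extension F) : Extension F :=
  (probes F false t z)ᶜ ⊓ (probes F true t zᶜ)ᶜ ⊓ orthOf F (.evalTag i t)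

def apply (i : ι) (z : Extension F) : Extension F :=
  (evalAt F i false z)ᶜ ⊓ (evalAt F i true z)ᶜ

theorem isOrthoPolyFn_apply (i : ι) : IsOrthoPolyFn (Extension F) 1 fun z => apply F i (z 0) := by
  have probes_poly (d t : Bool) {g : (Fin 1 → Extension F) → Extension F}
      (hg : IsOrthoPolyFn _ 1 g) : IsOrthoPolyFn _ 1 fun z => probes F d t (g z) :=
    .inf (.compl (.inf (.compl hg) (.const _))) (.const _)
  have evalAt_poly (t : Bool) : IsOrthoPolyFn _ 1 fun z => evalAt F i t (z 0) :=
    .inf (.inf (.compl (probes_poly _ _ (.proj 0))) (.compl (probes_poly _ _ (.compl (.proj 0)))))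
      (.const _)
  exact .inf (.compl (evalAt_poly false)) (.compl (evalAt_poly true))

variable {F}

theorem down_top : down F (⊤ : O) = Set.univ := by
  simp [down]

theorem down_bot [Nontrivial O] : down F (⊥ : O) = ∅ := by
  simp [down]

theorem atom_mem_down {b : O} (hb : b ≠ ⊥) : .atom b ∈ down F b :=
  Or.inr ⟨hb, le_rfl⟩

theorem down_inf (a b : O) : down F (a ⊓ b) = down F a ∩ down F b := by
  ext p
  rcases eq_or_ne a ⊤ with rfl | ha
  · simp [down]
  rcases eq_or_ne b ⊤ with rfl | hb
  · simp [down]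
  simp only [down, inf_eq_top_iff, ha, hb, and_self, ne_eq, le_inf_iff, false_or,
    Set.mem_ofPred_eq, Set.mem_inter_iff]
  tauto

theorem down_subset_down_iff {a b : O} : down F a ⊆ down F b ↔ a ≤ b := by
  refine ⟨fun h => ?_, fun hab p => ?_⟩
  · rcases eq_or_ne a ⊥ with rfl | ha
    · exact bot_le
    rcases h (atom_mem_down ha) with rfl | ⟨-, hab⟩
    exacts [le_top, hab]
  · rintro (rfl | ⟨hp, hpa⟩)
    exacts [Or.inl (top_le_iff.1 hab), Or.inr ⟨hp, hpa.trans hab⟩]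

theorem adj_atom_iff {p : Point O ι} {c : O} :
    (orth F).Adj p (.atom c) ↔ weight F p ≠ ⊥ ∧ c ≠ ⊥ ∧ weight F p ≤ cᶜ := by
  cases p <;> simp [orth, Link, weight]

theorem adj_copyTag_iff {p : Point O ι} {d : Bool} :
    (orth F).Adj p (.copyTag d) ↔ ∃ c, p = .copy d c := by
  cases p <;> simp [orth, Link, weight, eq_comm]

theorem adj_probeTag_iff {p : Point O ι} {d t : Bool} :
    (orth F).Adj p (.probeTag d t) ↔ ∃ c, p = .probe d t c := by
  cases p <;> simp [orth, Link, weight, eq_comm]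

theorem adj_evalTag_iff {p : Point O ι} {i : ι} {t : Bool} :
    (orth F).Adj p (.evalTag i t) ↔ ∃ a, p = .eval i t a := by
  cases p <;> simp [orth, Link, weight, eq_comm]

theorem adj_probe_copy {d t : Bool} {c c' : O} :
    (orth F).Adj (.probe d t c) (.copy d c') ↔ c ≤ c'ᶜ := by
  simp [orth, Link, weight]

theorem adj_eval_probe {i : ι} {d t : Bool} {a c : O} :
    (orth F).Adj (.eval i t a) (.probe d t c) ↔ c ≤ cond d aᶜ a := by
  simp [orth, Link, weight]

theorem adj_eval_iff {p : Point O ι} {i : ι} {t : Bool} {a : O} (hF : F i a ≠ ⊤) :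
    (orth F).Adj p (.eval i t a) ↔ (weight F p ≠ ⊥ ∧ weight F p ≤ F i a) ∨ Link p (.eval i t a) := by
  have hF' : (F i a)ᶜ ≠ ⊥ := fun h => hF (Ortholattice.compl_eq_bot.1 h)
  simp only [orth, weight, Ortholattice.compl_compl, ne_eq, hF', not_false_eq_true, true_and,
    Link, or_false]

theorem not_link_eval_false_and_true {p : Point O ι} {i : ι} {a : O} :
    ¬ (Link p (.eval i false a) ∧ Link p (.eval i true a)) := by
  rintro ⟨hfalse, htrue⟩
  cases p <;> simp only [Link] at hfalse htrue
  · exact Bool.false_ne_true (hfalse.1.symm.trans htrue.1)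
  · exact Bool.false_ne_true (hfalse.2.symm.trans htrue.2)

theorem extent_orthOf (g : Point O ι) : (orthOf F g).extent = {p | (orth F).Adj p g} := by
  ext p
  simp [orthOf]

/-- Only points of weight `≤ bᶜ` are orthogonal to the atom `b ∈ down F b`. -/
theorem lowerPolar_down [Nontrivial O] (b : O) :
    lowerPolar (orth F).Adj (down F b) = down F bᶜ := by
  rcases eq_or_ne b ⊤ with rfl | hb_top
  · rw [down_top, SimpleGraph.lowerPolar_adj_univ, Ortholattice.compl_top, down_bot]
  rcases eq_or_ne b ⊥ with rfl | hb_bot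
  · rw [down_bot, lowerPolar_empty, Ortholattice.compl_bot, down_top]
  ext p
  refine ⟨fun hp => ?_, ?_⟩
  · obtain ⟨hp, -, hpb⟩ := adj_atom_iff.1 (hp (atom_mem_down hb_bot))
    exact Or.inr ⟨hp, hpb⟩
  · rintro (hb | ⟨hp, hpb⟩) q (hq | ⟨hq, hqb⟩)
    · exact absurd (Ortholattice.compl_eq_top.1 hb) hb_bot
    · exact absurd (Ortholattice.compl_eq_top.1 hb) hb_bot
    · exact absurd hq hb_top
    · exact Or.inl ⟨hp, hq, hpb.trans (Ortholattice.compl_le_compl hqb)⟩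

section Embedding

variable [Nontrivial O]

variable (F) in
def embed (b : O) : Extension F :=
  ⟨down F b, down F bᶜ, by rw [SimpleGraph.upperPolar_adj, lowerPolar_down],
    by rw [lowerPolar_down, Ortholattice.compl_compl]⟩

theorem extent_embed (b : O) : (embed F b).extent = down F b := rfl

theorem intent_embed (b : O) : (embed F b).intent = down F bᶜ := rfl

theorem embed_compl (b : O) : embed F bᶜ = (embed F b)ᶜ := Concept.ext rfl

theorem embed_sup (a b : O) : embed F (a ⊔ b) = embed F a ⊔ embed F b :=
  Concept.ext' <| by
    rw [Concept.intent_sup, intent_embed, intent_embed, intent_embed, Ortholattice.compl_sup,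
      down_inf]

theorem isOrthoEmbedding_embed : IsOrthoEmbedding (embed F) := by
  refine ⟨fun a b h => ?_, embed_sup, fun a b => Concept.ext (down_inf a b),
    Concept.ext' ?_, Concept.ext down_top, embed_compl⟩
  · have h := congrArg Concept.extent h
    exact le_antisymm (down_subset_down_iff.1 h.le) (down_subset_down_iff.1 h.ge)
  · rw [intent_embed, Ortholattice.compl_bot, down_top, Concept.intent_bot]

theorem extent_probes_embed (d t : Bool) (b : O) :
    (probes F d t (embed F b)).extent = Point.probe d t '' Set.Iic b := by
  ext p
  simp only [probes, Concept.extent_inf, SimpleGraph.extent_compl, extent_orthOf, ← embed_compl,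
    extent_embed, Set.mem_inter_iff, Set.mem_ofPred_eq, mem_lowerPolar_iff]
  constructor
  · rintro ⟨hp, hprobe⟩
    obtain ⟨c, rfl⟩ := adj_probeTag_iff.1 hprobe
    refine ⟨c, Ortholattice.le_iff_forall_le_compl.2 fun c' hc' => ?_, rfl⟩
    exact adj_probe_copy.1 (hp ⟨hc', adj_copyTag_iff.2 ⟨c', rfl⟩⟩)
  · rintro ⟨c, hc, rfl⟩
    refine ⟨fun q ⟨hq, hqtag⟩ => ?_, adj_probeTag_iff.2 ⟨c, rfl⟩⟩
    obtain ⟨c', rfl⟩ := adj_copyTag_iff.1 hqtag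
    exact adj_probe_copy.2 (Ortholattice.le_iff_forall_le_compl.1 hc c' hq)

theorem extent_evalAt_embed (i : ι) (t : Bool) (a : O) :
    (evalAt F i t (embed F a)).extent = {Point.eval i t a} := by
  ext p
  simp only [evalAt, Concept.extent_inf, SimpleGraph.extent_compl, extent_orthOf, ← embed_compl,
    extent_probes_embed, Set.mem_inter_iff, Set.mem_ofPred_eq, Set.mem_singleton_iff,
    mem_lowerPolar_iff, Set.forall_mem_image, Set.mem_Iic]
  constructor
  · rintro ⟨⟨hle, hle_compl⟩, htag⟩
    obtain ⟨e, rfl⟩ := adj_evalTag_iff.1 htag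
    have hae : a ≤ e := adj_eval_probe.1 (hle le_rfl)
    have hea : e ≤ a := Ortholattice.compl_le_compl_iff.1 (adj_eval_probe.1 (hle_compl le_rfl))
    rw [le_antisymm hea hae]
  · rintro rfl
    exact ⟨⟨fun _ => (adj_eval_probe (d := false)).2, fun _ => (adj_eval_probe (d := true)).2⟩,
      adj_evalTag_iff.2 ⟨a, rfl⟩⟩

theorem apply_embed (hF : ∀ i a, F i a ≠ ⊤) (i : ι) (a : O) :
    apply F i (embed F a) = embed F (F i a) := by
  refine Concept.ext (Set.ext fun p => ?_)
  simp only [apply, Concept.extent_inf, SimpleGraph.extent_compl, extent_evalAt_embed,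
    extent_embed, Set.mem_inter_iff, mem_lowerPolar_singleton]
  have hlink := not_link_eval_false_and_true (p := p) (i := i) (a := a)
  simp only [adj_eval_iff (hF i a), down, hF, false_or, Set.mem_ofPred_eq]
  tauto

end Embedding

end OrthoFrame

/-- For every ortholattice `O` and every function `f : O → O` there is an ortholattice
extension `M` of `O` in which `f` is the restriction of a unary orthopolynomial
function. -/
theorem exists_orthoextension_representing_function (O : Type u) [Ortholattice O]
    (f : O → O) :
    ∃ (M : Type u) (_ : Ortholattice M) (e : O → M),
      IsOrthoEmbedding e ∧
      ∃ p : (Fin 1 → M) → M, IsOrthoPolyFn M 1 p ∧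
        ∀ a : O, p (fun _ => e a) = e (f a) := by
  by_cases htwo : ∀ x : O, x = ⊥ ∨ x = ⊤
  · exact ⟨O, inferInstance, id, isOrthoEmbedding_id, fun z => f (z 0),
      isOrthoPolyFn_of_forall_eq_bot_or_eq_top htwo f, fun _ => rfl⟩
  push Not at htwo
  obtain ⟨d, hd_bot, hd_top⟩ := htwo
  have : Nontrivial O := nontrivial_of_ne d ⊥ hd_bot
  choose g h hg hh hgh using
    fun a => Ortholattice.exists_sup_eq_of_ne_bot_of_ne_top hd_bot hd_top (f a)
  let F : ULift.{u} Bool → O → O := fun i a => cond i.down (h a) (g a)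
  have hF : ∀ i a, F i a ≠ ⊤ := by
    rintro ⟨_ | _⟩ a
    exacts [hg a, hh a]
  refine ⟨OrthoFrame.Extension F, inferInstance, OrthoFrame.embed F,
    OrthoFrame.isOrthoEmbedding_embed,
    fun z => OrthoFrame.apply F ⟨false⟩ (z 0) ⊔ OrthoFrame.apply F ⟨true⟩ (z 0),
    .sup (OrthoFrame.isOrthoPolyFn_apply F _) (OrthoFrame.isOrthoPolyFn_apply F _), fun a => ?_⟩
  dsimp only
  rw [OrthoFrame.apply_embed hF, OrthoFrame.apply_embed hF, ← OrthoFrame.embed_sup]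
  exact congrArg (OrthoFrame.embed F) (hgh a)
end
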